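/- (Kraus representation theorem) If Φ : M_p → M_q is a completely positive linear map, then there exist r ≤ pq and matrices A_1, ..., A_r ∈ M_{q×p} such that Φ(X) = Σ_{j=1}^r A_j X A_j^T for all X ∈ M_p. -/

import Mathlib

open Matrix

/-- Blockwise application of a map `Φ : M_p → M_q` to an `n × n` block matrix. -/
noncomputable def blockMap (p q n : ℕ)
    (Φ : Matrix (Fin p) (Fin p) ℝ → Matrix (Fin q) (Fin q) ℝ)
    (M : Matrix (Fin n × Fin p) (Fin n × Fin p) ℝ) :
    Matrix (Fin n × Fin q) (Fin n × Fin q) ℝ :=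
  Matrix.of fun a b => Φ (Matrix.of fun i j => M (a.1, i) (b.1, j)) a.2 b.2

/-- Complete positivity of `Φ : M_p → M_q`. -/
def IsCompletelyPositive (p q : ℕ)
    (Φ : Matrix (Fin p) (Fin p) ℝ → Matrix (Fin q) (Fin q) ℝ) : Prop :=
  ∀ n : ℕ, ∀ M : Matrix (Fin n × Fin p) (Fin n × Fin p) ℝ,
    M.PosSemidef → (blockMap p q n Φ M).PosSemidef

/-!
A linear map `Φ` is determined by its Choi matrix `C = [Φ(E_ij)]_ij`, and complete positivity
makes `C` positive semidefinite: it is the image of the rank-one positive matrix `vec 1 (vec 1)ᵀ`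
under the blockwise map. Factor `C = Bᵀ B` with `B` square of size `pq`. Reshaping the rows of `B`
into `q × p` matrices `A_c` gives a Kraus map `X ↦ Σ A_c X A_cᵀ` whose Choi matrix is
`Σ vec A_c (vec A_c)ᵀ = Bᵀ B = C`, so it coincides with `Φ`.
-/

section Choi

variable {m n r R : Type*} [Fintype m] [DecidableEq m] [CommSemiring R]

def choiMatrix (Φ : Matrix m m R → Matrix n n R) : Matrix (m × n) (m × n) R :=
  of fun a b => Φ (single a.1 b.1 1) a.2 b.2

theorem LinearMap.eq_of_choiMatrix_eq {Φ Ψ : Matrix m m R →ₗ[R] Matrix n n R}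
    (h : choiMatrix Φ = choiMatrix Ψ) : Φ = Ψ :=
  ext_linearMap R fun i j => LinearMap.ext_ring <| Matrix.ext fun k l =>
    congrFun (congrFun h (i, k)) (j, l)

theorem Matrix.mul_single_mul_transpose_apply (A B : Matrix n m R) (i j : m) (c : R) (k l : n) :
    (A * single i j c * Bᵀ) k l = A k i * c * B l j := by
  simp [mul_apply, single_apply, ite_and]

variable [Fintype r]

def krausMap (A : r → Matrix n m R) : Matrix m m R →ₗ[R] Matrix n n R where
  toFun X := ∑ c, A c * X * (A c)ᵀ
  map_add' X Y := by simp only [Matrix.mul_add, Matrix.add_mul, Finset.sum_add_distrib]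
  map_smul' a X := by
    simp only [Matrix.mul_smul, Matrix.smul_mul, Finset.smul_sum, RingHom.id_apply]

theorem choiMatrix_krausMap (A : r → Matrix n m R) :
    choiMatrix (krausMap A) = (of fun c => vec (A c))ᵀ * of fun c => vec (A c) := by
  ext ⟨i, k⟩ ⟨j, l⟩
  simp only [choiMatrix, krausMap, LinearMap.coe_mk, AddHom.coe_mk, of_apply, Matrix.sum_apply,
    mul_single_mul_transpose_apply, mul_one]
  simp only [mul_apply, transpose_apply, of_apply, vec]

end Choi

theorem blockMap_vecMulVec_vec_one {p q : ℕ}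
    (Φ : Matrix (Fin p) (Fin p) ℝ → Matrix (Fin q) (Fin q) ℝ) :
    blockMap p q p Φ (vecMulVec (vec 1) (vec 1)) = choiMatrix Φ := by
  ext ⟨i, k⟩ ⟨j, l⟩
  simp only [blockMap, choiMatrix, of_apply]
  congr 2
  ext a b
  simp only [vecMulVec_apply, vec, one_apply, ite_and, ite_mul, one_mul, zero_mul, eq_comm]

theorem IsCompletelyPositive.posSemidef_choiMatrix {p q : ℕ}
    {Φ : Matrix (Fin p) (Fin p) ℝ → Matrix (Fin q) (Fin q) ℝ} (hΦ : IsCompletelyPositive p q Φ) :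
    (choiMatrix Φ).PosSemidef := by
  rw [← blockMap_vecMulVec_vec_one]
  simpa only [star_trivial] using hΦ p _ (posSemidef_vecMulVec_self_star (vec (1 : Matrix (Fin p) (Fin p) ℝ)))

open scoped ComplexOrder in
theorem Matrix.PosSemidef.exists_eq_conjTranspose_mul_self {ι 𝕜 : Type*} [Fintype ι]
    [DecidableEq ι] [RCLike 𝕜] {M : Matrix ι ι 𝕜} (hM : M.PosSemidef) :
    ∃ B : Matrix (Fin (Fintype.card ι)) ι 𝕜, M = Bᴴ * B := by
  open scoped MatrixOrder in
  obtain ⟨B, rfl⟩ := CStarAlgebra.nonneg_iff_eq_star_mul_self.mp hM.nonneg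
  refine ⟨B.submatrix (Fintype.equivFin ι).symm id, ?_⟩
  rw [conjTranspose_submatrix, submatrix_mul_equiv, submatrix_id_id, star_eq_conjTranspose]

/-- (Kraus representation theorem.)  If `Φ : M_p → M_q` is a completely positive
linear map, then there exist `r ≤ pq` and `A_1, …, A_r ∈ M_{q×p}` such that
`Φ(X) = Σ_{j=1}^r A_j X A_jᵀ` for all `X`. -/
theorem kraus_representation (p q : ℕ)
    (Φ : Matrix (Fin p) (Fin p) ℝ → Matrix (Fin q) (Fin q) ℝ)
    (hΦ : IsLinearMap ℝ Φ) (hcp : IsCompletelyPositive p q Φ) :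
    ∃ r : ℕ, r ≤ p * q ∧ ∃ A : Fin r → Matrix (Fin q) (Fin p) ℝ,
      ∀ X, Φ X = ∑ j : Fin r, A j * X * (A j)ᵀ := by
  obtain ⟨B, hB⟩ := hcp.posSemidef_choiMatrix.exists_eq_conjTranspose_mul_self
  set A : Fin _ → Matrix (Fin q) (Fin p) ℝ := fun c => of fun k i => B c (i, k)
  have hΦ_eq : hΦ.mk' Φ = krausMap A := by
    apply LinearMap.eq_of_choiMatrix_eq
    rw [choiMatrix_krausMap, ← conjTranspose_eq_transpose_of_trivial]
    exact hB
  exact ⟨_, by simp, A, fun X => LinearMap.congr_fun hΦ_eq X⟩
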